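/- Let f : [0,1] → ℝ be L-Lipschitz. For M ∈ ℕ, let {φ_m}_{m=0}^M be the partition of unity φ_m(t) = ψ(3M(t − m/M)) (ψ trapezoidal as above), and define f̃(t) = Σ_{m=0}^M φ_m(t)·f(m/M). Then (i) ‖f̃ − f‖_{L∞([0,1])} ≤ (2/(3M))·L, and (ii) f̃ is 5L-Lipschitz on [0,1]. -/

import Mathlib

/-- The trapezoidal hat function: `ψ(z) = 1` for `|z| ≤ 1`, `ψ(z) = 2 - |z|` for
`1 ≤ |z| ≤ 2`, and `ψ(z) = 0` for `|z| > 2`. -/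
noncomputable def trap (z : ℝ) : ℝ :=
  if |z| ≤ 1 then 1 else if |z| ≤ 2 then 2 - |z| else 0

/-- `φ_m(t) = ψ(3M(t - m/M))`. -/
noncomputable def pou (M m : ℕ) (t : ℝ) : ℝ :=
  trap (3 * (M : ℝ) * (t - (m : ℝ) / (M : ℝ)))

/-!
In the variable `x = M t` the weight `φ_m` is `ψ(3(x - m))`: it vanishes once `|x - m| ≥ 2/3`,
and on `[k, k + 1]` only `φ_k` and `φ_{k+1}` are active, summing to `1`. Hence `f̃(t)` is a
convex combination of values `f(m/M)` with `|t - m/M| ≤ 2/(3M)`, which gives (i). For (ii),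
if `|t - s| ≥ 1/(3M)` then (i) twice and the Lipschitz bound on `f` give
`|f̃ t - f̃ s| ≤ 4/(3M) L + L |t - s| ≤ 5 L |t - s|`. Otherwise `t` and `s` see the same two
weights, so `f̃ t - f̃ s = (φ_{k+1} t - φ_{k+1} s) (f((k+1)/M) - f(k/M))`, which is at most
`3M |t - s| · L/M`.
-/

open Finset

lemma trap_nonneg (z : ℝ) : 0 ≤ trap z := by
  unfold trap; split_ifs <;> linarith

lemma trap_eq_zero {z : ℝ} (h : 2 ≤ |z|) : trap z = 0 := by
  unfold trap; split_ifs <;> first | rfl | linarith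

lemma abs_trap_sub_le (a b : ℝ) : |trap a - trap b| ≤ |a - b| := by
  have := abs_sub_abs_le_abs_sub a b
  have := abs_sub_abs_le_abs_sub b a
  rw [abs_sub_comm b a] at this
  unfold trap
  split_ifs <;> rw [abs_le] <;> constructor <;> linarith [abs_nonneg a, abs_nonneg b]

lemma trap_add_trap_sub_one {θ : ℝ} (h0 : 0 ≤ θ) (h1 : θ ≤ 1) :
    trap (3 * θ) + trap (3 * (θ - 1)) = 1 := by
  unfold trap
  rw [abs_of_nonneg (by linarith), abs_of_nonpos (by linarith)]
  split_ifs <;> linarith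

lemma abs_sum_mul_sub_le_of_sum_eq_one {ι : Type*} {s : Finset ι} {w y : ι → ℝ} {y₀ ε : ℝ}
    (hw : ∀ i ∈ s, 0 ≤ w i) (hw₁ : ∑ i ∈ s, w i = 1)
    (hy : ∀ i ∈ s, w i ≠ 0 → |y i - y₀| ≤ ε) :
    |∑ i ∈ s, w i * y i - y₀| ≤ ε := by
  have hterm : ∀ i ∈ s, |w i * (y i - y₀)| ≤ w i * ε := by
    intro i hi
    rw [abs_mul, abs_of_nonneg (hw i hi)]
    rcases eq_or_ne (w i) 0 with h | h
    · simp [h]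
    · exact mul_le_mul_of_nonneg_left (hy i hi h) (hw i hi)
  calc |∑ i ∈ s, w i * y i - y₀| = |∑ i ∈ s, w i * (y i - y₀)| := by
        simp only [mul_sub, sum_sub_distrib, ← sum_mul, hw₁, one_mul]
    _ ≤ ∑ i ∈ s, w i * ε := (abs_sum_le_sum_abs _ _).trans (sum_le_sum hterm)
    _ = ε := by rw [← sum_mul, hw₁, one_mul]

lemma sum_mul_sub_sum_mul_eq_of_sum_eq {ι : Type*} {s : Finset ι} {w v : ι → ℝ}
    (h : ∑ i ∈ s, w i = ∑ i ∈ s, v i) (y : ι → ℝ) (c : ℝ) :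
    ∑ i ∈ s, w i * y i - ∑ i ∈ s, v i * y i = ∑ i ∈ s, (w i - v i) * (y i - c) := by
  simp only [sub_mul, mul_sub, sum_sub_distrib, ← sum_mul, h]
  ring

section pou

variable {M : ℕ}

lemma pou_eq_trap (hM : 0 < M) (m : ℕ) (t : ℝ) : pou M m t = trap (3 * (M * t - m)) := by
  have : (M : ℝ) ≠ 0 := by positivity
  unfold pou
  congr 1
  field_simp

lemma pou_nonneg (m : ℕ) (t : ℝ) : 0 ≤ pou M m t := trap_nonneg _

lemma pou_eq_zero (hM : 0 < M) {m : ℕ} {t : ℝ} (h : 2 / 3 ≤ |M * t - m|) : pou M m t = 0 := by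
  rw [pou_eq_trap hM]
  apply trap_eq_zero
  rw [abs_mul, abs_of_pos three_pos]
  linarith

lemma abs_pou_sub_le (m : ℕ) (s t : ℝ) : |pou M m t - pou M m s| ≤ 3 * M * |t - s| := by
  unfold pou
  refine (abs_trap_sub_le _ _).trans_eq ?_
  rw [← mul_sub, sub_sub_sub_cancel_right, abs_mul, abs_of_nonneg (by positivity)]

lemma abs_div_sub_le_of_pou_ne_zero (hM : 0 < M) {m : ℕ} {t : ℝ} (h : pou M m t ≠ 0) :
    |(m : ℝ) / M - t| ≤ 2 / (3 * M) := by
  have hM' : (0 : ℝ) < M := by exact_mod_cast hM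
  have hclose : |M * t - m| < 2 / 3 := lt_of_not_ge fun h' => h (pou_eq_zero hM h')
  rw [show (m : ℝ) / M - t = -((M * t - m) / M) by field_simp; ring, abs_neg, abs_div,
    abs_of_pos hM', div_le_div_iff₀ hM' (by positivity)]
  nlinarith

lemma pou_floor_add_pou_floor_succ (hM : 0 < M) {t : ℝ} (ht : 0 ≤ t) :
    pou M ⌊M * t⌋₊ t + pou M (⌊M * t⌋₊ + 1) t = 1 := by
  have h₀ : (⌊M * t⌋₊ : ℝ) ≤ M * t := Nat.floor_le (by positivity)
  have h₁ : M * t < ⌊M * t⌋₊ + 1 := Nat.lt_floor_add_one _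
  rw [pou_eq_trap hM, pou_eq_trap hM, Nat.cast_succ, ← sub_sub]
  exact trap_add_trap_sub_one (by linarith) (by linarith)

lemma pou_eq_zero_of_ne_floor (hM : 0 < M) {m : ℕ} {s t : ℝ} (ht : 0 ≤ t)
    (hst : M * |t - s| < 1 / 3) (hk : m ≠ ⌊M * t⌋₊) (hk₁ : m ≠ ⌊M * t⌋₊ + 1) :
    pou M m s = 0 := by
  have h₀ : (⌊M * t⌋₊ : ℝ) ≤ M * t := Nat.floor_le (by positivity)
  have h₁ : M * t < ⌊M * t⌋₊ + 1 := Nat.lt_floor_add_one _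
  have hfar : 1 ≤ |M * t - m| := by
    rcases Nat.lt_or_gt_of_ne hk with h | h
    · have : (m : ℝ) + 1 ≤ ⌊M * t⌋₊ := by exact_mod_cast h
      exact le_abs.2 (Or.inl (by linarith))
    · have : (⌊M * t⌋₊ : ℝ) + 2 ≤ m := by exact_mod_cast (show ⌊M * t⌋₊ + 2 ≤ m by omega)
      exact le_abs.2 (Or.inr (by linarith))
  apply pou_eq_zero hM
  have := abs_sub_abs_le_abs_sub (M * t - m) (M * (t - s))
  rw [abs_mul, Nat.abs_cast, show M * t - m - M * (t - s) = M * s - (m : ℝ) by ring] at this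
  linarith

lemma sum_pou (hM : 0 < M) {t : ℝ} (ht : t ∈ Set.Icc (0 : ℝ) 1) :
    ∑ m ∈ range (M + 1), pou M m t = 1 := by
  have hM' : (0 : ℝ) < M := by exact_mod_cast hM
  have hk : ⌊M * t⌋₊ ≤ M := Nat.floor_le_of_le (by nlinarith [ht.2])
  have hsum : ∑ m ∈ range (M + 2), pou M m t = 1 := by
    rw [sum_eq_add_of_mem ⌊M * t⌋₊ (⌊M * t⌋₊ + 1) (mem_range.2 (by omega))
      (mem_range.2 (by omega)) (by omega), pou_floor_add_pou_floor_succ hM ht.1]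
    exact fun m _ hm => pou_eq_zero_of_ne_floor hM ht.1 (by simp) hm.1 hm.2
  have hlast : pou M (M + 1) t = 0 := by
    apply pou_eq_zero hM
    rw [abs_sub_comm, Nat.cast_succ, abs_of_pos (by nlinarith [ht.2])]
    nlinarith [ht.2]
  rwa [sum_range_succ, hlast, add_zero] at hsum

end pou

noncomputable def quasiInterp (M : ℕ) (f : ℝ → ℝ) (t : ℝ) : ℝ :=
  ∑ m ∈ range (M + 1), pou M m t * f ((m : ℝ) / M)

section quasiInterp

variable {M : ℕ} {L : ℝ} {f : ℝ → ℝ}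

lemma div_mem_Icc_of_le (hM : 0 < M) {m : ℕ} (hm : m ≤ M) : (m : ℝ) / M ∈ Set.Icc (0 : ℝ) 1 :=
  ⟨by positivity, div_le_one_of_le₀ (by exact_mod_cast hm) (Nat.cast_nonneg M)⟩

lemma abs_quasiInterp_sub_le (hM : 0 < M) (hL : 0 ≤ L)
    (hf : ∀ s ∈ Set.Icc (0 : ℝ) 1, ∀ t ∈ Set.Icc (0 : ℝ) 1, |f t - f s| ≤ L * |t - s|)
    {t : ℝ} (ht : t ∈ Set.Icc (0 : ℝ) 1) :
    |quasiInterp M f t - f t| ≤ 2 / (3 * M) * L := by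
  refine abs_sum_mul_sub_le_of_sum_eq_one (fun m _ => pou_nonneg m t) (sum_pou hM ht) ?_
  intro m hm hm₀
  have hmM : m ≤ M := Nat.lt_succ_iff.1 (mem_range.1 hm)
  calc |f (m / M) - f t| ≤ L * |(m : ℝ) / M - t| := hf t ht _ (div_mem_Icc_of_le hM hmM)
    _ ≤ L * (2 / (3 * M)) :=
        mul_le_mul_of_nonneg_left (abs_div_sub_le_of_pou_ne_zero hM hm₀) hL
    _ = 2 / (3 * M) * L := mul_comm _ _

lemma abs_quasiInterp_sub_le_of_near (hM : 0 < M) (hL : 0 ≤ L)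
    (hf : ∀ s ∈ Set.Icc (0 : ℝ) 1, ∀ t ∈ Set.Icc (0 : ℝ) 1, |f t - f s| ≤ L * |t - s|)
    {s t : ℝ} (hs : s ∈ Set.Icc (0 : ℝ) 1) (ht : t ∈ Set.Icc (0 : ℝ) 1)
    (hst : |t - s| < 1 / (3 * M)) :
    |quasiInterp M f t - quasiInterp M f s| ≤ 3 * L * |t - s| := by
  have hM' : (0 : ℝ) < M := by exact_mod_cast hM
  have hst' : M * |t - s| < 1 / 3 := by
    rw [lt_div_iff₀ (by positivity)] at hst
    linarith
  set k := ⌊M * t⌋₊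
  -- Centering at `f (k / M)` kills the `m = k` term; the others vanish except `m = k + 1`.
  have hterm : ∀ m ∈ range (M + 1),
      |(pou M m t - pou M m s) * (f (m / M) - f (k / M))| ≤
        if m = k + 1 then 3 * L * |t - s| else 0 := by
    intro m hm
    have hmM : m ≤ M := Nat.lt_succ_iff.1 (mem_range.1 hm)
    split_ifs with hk₁
    · subst hk₁
      have hf₁ : |f ((k + 1 : ℕ) / M) - f (k / M)| ≤ L / M := by
        refine (hf _ (div_mem_Icc_of_le hM (by omega)) _ (div_mem_Icc_of_le hM hmM)).trans_eq ?_
        rw [Nat.cast_succ, ← sub_div, add_sub_cancel_left, abs_of_pos (by positivity), mul_one_div]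
      rw [abs_mul]
      refine (mul_le_mul (abs_pou_sub_le _ s t) hf₁ (abs_nonneg _) (by positivity)).trans_eq ?_
      field_simp
    · by_cases hk : m = k
      · simp [hk]
      · simp [pou_eq_zero_of_ne_floor (s := t) hM ht.1 (by simp) hk hk₁,
          pou_eq_zero_of_ne_floor hM ht.1 hst' hk hk₁]
  calc |quasiInterp M f t - quasiInterp M f s|
      = |∑ m ∈ range (M + 1), (pou M m t - pou M m s) * (f (m / M) - f (k / M))| := by
        rw [quasiInterp, quasiInterp,
          sum_mul_sub_sum_mul_eq_of_sum_eq (by rw [sum_pou hM ht, sum_pou hM hs])]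
    _ ≤ ∑ m ∈ range (M + 1), if m = k + 1 then 3 * L * |t - s| else 0 :=
        (abs_sum_le_sum_abs _ _).trans (sum_le_sum hterm)
    _ ≤ 3 * L * |t - s| := by
        rw [sum_ite_eq']
        split_ifs
        · rfl
        · positivity

lemma abs_quasiInterp_sub_le_mul (hM : 0 < M) (hL : 0 ≤ L)
    (hf : ∀ s ∈ Set.Icc (0 : ℝ) 1, ∀ t ∈ Set.Icc (0 : ℝ) 1, |f t - f s| ≤ L * |t - s|)
    {s t : ℝ} (hs : s ∈ Set.Icc (0 : ℝ) 1) (ht : t ∈ Set.Icc (0 : ℝ) 1) :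
    |quasiInterp M f t - quasiInterp M f s| ≤ 5 * L * |t - s| := by
  rcases lt_or_ge |t - s| (1 / (3 * M)) with hnear | hfar
  · nlinarith [abs_quasiInterp_sub_le_of_near hM hL hf hs ht hnear, abs_nonneg (t - s)]
  · have ht' := abs_quasiInterp_sub_le hM hL hf ht
    have hs' := abs_quasiInterp_sub_le hM hL hf hs
    have hfar' : 2 / (3 * M) * L ≤ 2 * L * |t - s| := by
      have := mul_le_mul_of_nonneg_left hfar hL
      calc 2 / (3 * M) * L = 2 * (L * (1 / (3 * M))) := by ring
        _ ≤ 2 * L * |t - s| := by linarith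
    calc |quasiInterp M f t - quasiInterp M f s|
        ≤ |quasiInterp M f t - f t| + |f t - f s| + |f s - quasiInterp M f s| :=
          (abs_sub_le _ (f s) _).trans (add_le_add_left (abs_sub_le _ (f t) _) _)
      _ ≤ 5 * L * |t - s| := by
          rw [abs_sub_comm (f s)]
          linarith [hf s hs t ht]

end quasiInterp

/-- for an `L`-Lipschitz `f : [0,1] → ℝ`, the quasi-interpolant
`f̃(t) = Σ_{m=0}^M φ_m(t)·f(m/M)` satisfies (i) `‖f̃ - f‖_{L∞([0,1])} ≤ (2/(3M))·L`
and (ii) `f̃` is `5L`-Lipschitz on `[0,1]`. -/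
theorem stmt10 (M : ℕ) (hM : 1 ≤ M) (L : ℝ) (hL : 0 ≤ L)
    (f : ℝ → ℝ)
    (hf : ∀ s ∈ Set.Icc (0 : ℝ) 1, ∀ t ∈ Set.Icc (0 : ℝ) 1, |f t - f s| ≤ L * |t - s|)
    (ftil : ℝ → ℝ)
    (hftil : ∀ t, ftil t = ∑ m ∈ Finset.range (M + 1), pou M m t * f ((m : ℝ) / M)) :
    (∀ t ∈ Set.Icc (0 : ℝ) 1, |ftil t - f t| ≤ 2 / (3 * (M : ℝ)) * L) ∧
      ∀ s ∈ Set.Icc (0 : ℝ) 1, ∀ t ∈ Set.Icc (0 : ℝ) 1,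
        |ftil t - ftil s| ≤ 5 * L * |t - s| := by
  obtain rfl : ftil = quasiInterp M f := funext hftil
  exact ⟨fun t ht => abs_quasiInterp_sub_le hM hL hf ht,
    fun s hs t ht => abs_quasiInterp_sub_le_mul hM hL hf hs ht⟩
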